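/- Let E be a real Hilbert space and f : E → ℝ a convex differentiable L-smooth function. Then for every γ > 0 and all x, y ∈ E: ‖(x − γ∇f(x)) − (y − γ∇f(y))‖² ≤ ‖x − y‖² − γ(2/L − γ)‖∇f(x) − ∇f(y)‖². -/

import Mathlib

/-!
Restricting `f` to segments gives the first-order convexity bound
`f a + ⟪∇f a, b - a⟫ ≤ f b` and the descent lemma `f b ≤ f a + ⟪∇f a, b - a⟫ + L/2 ‖b - a‖²`.
Comparing both at the point `y - L⁻¹ (∇f y - ∇f x)` yields
`f x + ⟪∇f x, y - x⟫ + ‖∇f y - ∇f x‖² / (2L) ≤ f y`; adding this to the same bound with `x`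
and `y` swapped gives cocoercivity `‖∇f x - ∇f y‖² / L ≤ ⟪x - y, ∇f x - ∇f y⟫`, and expanding
the square of the difference of the two gradient steps turns cocoercivity into the claim.
-/

open RealInnerProductSpace AffineMap

section

variable {E : Type*} [NormedAddCommGroup E] [InnerProductSpace ℝ E] [CompleteSpace E] {f : E → ℝ}

theorem HasGradientAt.hasDerivAt_comp_lineMap {g a b : E} {t : ℝ}
    (hf : HasGradientAt f g (lineMap a b t)) :
    HasDerivAt (f ∘ lineMap a b) ⟪g, b - a⟫ t := by
  simpa using hf.hasFDerivAt.comp_hasDerivAt t hasDerivAt_lineMap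

theorem ConvexOn.add_inner_le_of_hasGradientAt {s : Set E} {g a b : E} (hf : ConvexOn ℝ s f)
    (ha : a ∈ s) (hb : b ∈ s) (hg : HasGradientAt f g a) :
    f a + ⟪g, b - a⟫ ≤ f b := by
  have hline := (hf.comp_affineMap (lineMap a b)).le_slope_of_hasDerivAt
    (by simpa using ha) (by simpa using hb) one_pos
    (HasGradientAt.hasDerivAt_comp_lineMap (t := 0) (by simpa using hg))
  rw [slope_def_field] at hline
  simp only [Function.comp_apply, lineMap_apply_one, lineMap_apply_zero, sub_zero, div_one] at hline
  linarith

variable {f' : E → E} {L : ℝ}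

theorem le_add_inner_add_half_mul_sq_of_lipschitz_gradient
    (hdiff : ∀ x, HasGradientAt f (f' x) x) (hsmooth : ∀ x y, ‖f' x - f' y‖ ≤ L * ‖x - y‖)
    (a b : E) :
    f b ≤ f a + ⟪f' a, b - a⟫ + L / 2 * ‖b - a‖ ^ 2 := by
  set φ : ℝ → ℝ := fun t ↦ f (lineMap a b t) - t * ⟪f' a, b - a⟫ - L / 2 * t ^ 2 * ‖b - a‖ ^ 2
  have hφ : ∀ t, HasDerivAt φ (⟪f' (lineMap a b t) - f' a, b - a⟫ - L * t * ‖b - a‖ ^ 2) t :=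
    fun t ↦ ((((hdiff (lineMap a b t)).hasDerivAt_comp_lineMap).sub
      ((hasDerivAt_id t).mul_const ⟪f' a, b - a⟫)).sub
      (((hasDerivAt_pow 2 t).const_mul (L / 2)).mul_const (‖b - a‖ ^ 2))).congr_deriv
      (by rw [inner_sub_left]; ring)
  have hφ' : ∀ t ∈ interior (Set.Icc (0 : ℝ) 1),
      ⟪f' (lineMap a b t) - f' a, b - a⟫ - L * t * ‖b - a‖ ^ 2 ≤ 0 := by
    intro t ht
    rw [interior_Icc] at ht
    have hdist : ‖lineMap a b t - a‖ = t * ‖b - a‖ := by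
      rw [lineMap_apply_module', add_sub_cancel_right, norm_smul, Real.norm_of_nonneg ht.1.le]
    rw [sub_nonpos]
    calc ⟪f' (lineMap a b t) - f' a, b - a⟫
        ≤ ‖f' (lineMap a b t) - f' a‖ * ‖b - a‖ := real_inner_le_norm _ _
      _ ≤ L * ‖lineMap a b t - a‖ * ‖b - a‖ := by gcongr; exact hsmooth _ _
      _ = L * t * ‖b - a‖ ^ 2 := by rw [hdist]; ring
  have hmono := antitoneOn_of_hasDerivWithinAt_nonpos (convex_Icc (0 : ℝ) 1)
    (fun t _ ↦ (hφ t).continuousAt.continuousWithinAt) (fun t _ ↦ (hφ t).hasDerivWithinAt) hφ'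
    (Set.left_mem_Icc.2 zero_le_one) (Set.right_mem_Icc.2 zero_le_one) zero_le_one
  simp only [lineMap_apply_one, one_mul, one_pow, mul_one, lineMap_apply_zero, zero_mul, sub_zero,
    ne_eq, OfNat.ofNat_ne_zero, not_false_eq_true, zero_pow, mul_zero, tsub_le_iff_right, φ] at hmono
  linarith

theorem ConvexOn.add_inner_add_sq_norm_sub_le_of_lipschitz_gradient
    (hdiff : ∀ x, HasGradientAt f (f' x) x) (hconv : ConvexOn ℝ Set.univ f)
    (hsmooth : ∀ x y, ‖f' x - f' y‖ ≤ L * ‖x - y‖) (hL : 0 < L) (x y : E) :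
    f x + ⟪f' x, y - x⟫ + 1 / (2 * L) * ‖f' y - f' x‖ ^ 2 ≤ f y := by
  set g := f' y - f' x
  have hx := hconv.add_inner_le_of_hasGradientAt (b := y - L⁻¹ • g) trivial trivial (hdiff x)
  have hy := le_add_inner_add_half_mul_sq_of_lipschitz_gradient hdiff hsmooth y (y - L⁻¹ • g)
  rw [sub_right_comm, inner_sub_right, real_inner_smul_right] at hx
  rw [sub_sub_cancel_left, inner_neg_right, real_inner_smul_right, norm_neg, norm_smul,
    Real.norm_of_nonneg (inv_nonneg.2 hL.le)] at hy
  have hg : L⁻¹ * ⟪f' y, g⟫ - L⁻¹ * ⟪f' x, g⟫ = L⁻¹ * ‖g‖ ^ 2 := by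
    rw [← mul_sub, ← inner_sub_left, real_inner_self_eq_norm_sq]
  have hquad : L / 2 * (L⁻¹ * ‖g‖) ^ 2 = 1 / (2 * L) * ‖g‖ ^ 2 := by field_simp
  have hlin : L⁻¹ * ‖g‖ ^ 2 = 2 * (1 / (2 * L) * ‖g‖ ^ 2) := by field_simp
  linarith

theorem ConvexOn.cocoercive_of_lipschitz_gradient
    (hdiff : ∀ x, HasGradientAt f (f' x) x) (hconv : ConvexOn ℝ Set.univ f)
    (hsmooth : ∀ x y, ‖f' x - f' y‖ ≤ L * ‖x - y‖) (x y : E) :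
    1 / L * ‖f' x - f' y‖ ^ 2 ≤ ⟪x - y, f' x - f' y⟫ := by
  rcases le_or_gt L 0 with hL | hL
  · have hconst : f' x = f' y := sub_eq_zero.1 <| norm_le_zero_iff.1 <|
      (hsmooth x y).trans (mul_nonpos_of_nonpos_of_nonneg hL (norm_nonneg _))
    simp [hconst]
  · have hxy := hconv.add_inner_add_sq_norm_sub_le_of_lipschitz_gradient hdiff hsmooth hL x y
    have hyx := hconv.add_inner_add_sq_norm_sub_le_of_lipschitz_gradient hdiff hsmooth hL y x
    have hinner : ⟪f' x, y - x⟫ + ⟪f' y, x - y⟫ = -⟪x - y, f' x - f' y⟫ := by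
      simp only [inner_sub_left, inner_sub_right, real_inner_comm y (f' x), real_inner_comm x (f' x),
        real_inner_comm x (f' y), real_inner_comm y (f' y)]
      ring
    rw [norm_sub_rev (f' y)] at hxy
    have hhalf : 1 / L * ‖f' x - f' y‖ ^ 2 = 2 * (1 / (2 * L) * ‖f' x - f' y‖ ^ 2) := by field_simp
    linarith

end

theorem norm_sub_smul_sub_sq_le_of_cocoercive {E : Type*} [NormedAddCommGroup E]
    [InnerProductSpace ℝ E] {T : E → E} {L γ : ℝ} {x y : E}
    (hT : 1 / L * ‖T x - T y‖ ^ 2 ≤ ⟪x - y, T x - T y⟫) (hγ : 0 ≤ γ) :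
    ‖x - γ • T x - (y - γ • T y)‖ ^ 2 ≤ ‖x - y‖ ^ 2 - γ * (2 / L - γ) * ‖T x - T y‖ ^ 2 := by
  have hstep : x - γ • T x - (y - γ • T y) = (x - y) - γ • (T x - T y) := by
    rw [smul_sub]; abel
  rw [hstep, norm_sub_sq_real, real_inner_smul_right, norm_smul, Real.norm_eq_abs, mul_pow, sq_abs]
  linear_combination 2 * mul_le_mul_of_nonneg_left hT hγ

/-- cocoercivity-type inequality for the gradient step of a convex
`L`-smooth function on a real Hilbert space, for an arbitrary stepsize `γ > 0`. -/
theorem dave_rpg_convex_gradient_step_inequality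
    {E : Type*} [NormedAddCommGroup E] [InnerProductSpace ℝ E] [CompleteSpace E]
    (f : E → ℝ) (f' : E → E) (L : ℝ)
    (hdiff : ∀ x, HasGradientAt f (f' x) x)
    (hconv : ConvexOn ℝ Set.univ f)
    (hsmooth : ∀ x y, ‖f' x - f' y‖ ≤ L * ‖x - y‖)
    (γ : ℝ) (hγ : 0 < γ) (x y : E) :
    ‖x - γ • f' x - (y - γ • f' y)‖ ^ 2 ≤
      ‖x - y‖ ^ 2 - γ * (2 / L - γ) * ‖f' x - f' y‖ ^ 2 :=
  norm_sub_smul_sub_sq_le_of_cocoercive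
    (hconv.cocoercive_of_lipschitz_gradient hdiff hsmooth x y) hγ.le
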